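/- arXiv:2012.07484 — 3 statements merged into one kernel-verified Lean document; each statement's English description precedes it below -/
import Mathlib

section
/- Let g(u,γ) = u³ − 1.1u² + (0.1 + 1/γ)u with γ > 0. If 0 < γ ≤ 300/91, then for every p > 0 the equation g(u,γ) = p has exactly one real solution u. -/
/-- For `0 < γ ≤ 300/91` and every `p > 0`, the equation
`g(u,γ) = u³ − 1.1u² + (0.1 + 1/γ)u = p` has exactly one real solution. -/
theorem stmt_3 (γ : ℝ) (hγ0 : 0 < γ) (hγ : γ ≤ 300 / 91) :
    ∀ p : ℝ, p > 0 →
      ∃! u : ℝ, u ^ 3 - 1.1 * u ^ 2 + (0.1 + 1 / γ) * u = p := by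
  intro p hp
  set c : ℝ := 0.1 + 1 / γ with hcdef
  have h1 : (91 : ℝ) / 300 ≤ 1 / γ := by
    have := one_div_le_one_div_of_le hγ0 hγ
    rw [one_div]
    norm_num at this ⊢
    linarith
  have hcge : (121 : ℝ) / 300 ≤ c := by
    rw [hcdef, one_div] at *; norm_num at h1 ⊢; linarith
  have key : ∀ a b : ℝ, a < b →
      a ^ 3 - 1.1 * a ^ 2 + c * a < b ^ 3 - 1.1 * b ^ 2 + c * b := by
    intro a b hab
    have hne : a - b ≠ 0 := sub_ne_zero.mpr (ne_of_lt hab)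
    have hsq : 0 < (a - b) ^ 2 := by positivity
    have hq : 0 < a ^ 2 + a * b + b ^ 2 - 1.1 * (a + b) + c := by
      nlinarith [sq_nonneg (a + b - 11 / 15)]
    nlinarith [mul_pos (sub_pos.mpr hab) hq]
  set f : ℝ → ℝ := fun u => u ^ 3 - 1.1 * u ^ 2 + c * u with hfdef
  have hmono : StrictMono f := fun a b hab => key a b hab
  have hcont : Continuous f := by fun_prop
  have h02 : (0 : ℝ) ≤ p + 2 := by linarith
  have hf0 : f 0 = 0 := by simp [hfdef]
  have hfp2 : p ≤ f (p + 2) := by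
    show p ≤ (p + 2) ^ 3 - 1.1 * (p + 2) ^ 2 + c * (p + 2)
    nlinarith [sq_nonneg p, mul_pos hp hp]
  have hmem : p ∈ Set.Icc (f 0) (f (p + 2)) := ⟨by rw [hf0]; linarith, hfp2⟩
  obtain ⟨u, -, hu⟩ := intermediate_value_Icc h02 hcont.continuousOn hmem
  exact ⟨u, hu, fun v hv => hmono.injective (hv.trans hu.symm)⟩
end

section
/- Let h(u) = u(u−1)(0.1−u). If (u₀,0,w₀) is an equilibrium of the system u' = v, v' = (1/5)(−h(u)+cv+w−p), w' = (δ/c)(u−γw) with δ = 0.01 whose Jacobian has eigenvalues 0 and ±iμ₀ with μ₀ > 0, then γ·h'(u₀) = 1, c² = 0.05γ (so c = √(0.05γ) when c > 0), and μ₀² = (100 − γ²)/(500γ) > 0. -/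
open Matrix Polynomial Complex

/-- Fold-Hopf conditions for the FitzHugh-Nagumo traveling-wave system with
`α = 0.1`, `d = 5`, `δ = 0.01`: if `(u₀,0,w₀)` is an equilibrium of
`u' = v, v' = (1/5)(−h(u)+cv+w−p), w' = (δ/c)(u−γw)` whose Jacobian has
eigenvalues `0, ±iμ₀` with `μ₀ > 0`, then `γ h'(u₀) = 1`, `c² = 0.05γ`
(so `c = √(0.05γ)` when `c > 0`), and `μ₀² = (100 − γ²)/(500γ) > 0`. -/
theorem stmt_6 (u₀ w₀ c γ p μ₀ hd : ℝ) (δ : ℝ)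
    (hδ : δ = 0.01) (hc : c ≠ 0) (hγ : γ > 0) (hp : p > 0) (hμ₀ : μ₀ > 0)
    (hderiv : HasDerivAt (fun u : ℝ => u * (u - 1) * (0.1 - u)) hd u₀)
    -- equilibrium conditions
    (heq1 : (1 / 5) * (-(u₀ * (u₀ - 1) * (0.1 - u₀)) + c * 0 + w₀ - p) = 0)
    (heq2 : (δ / c) * (u₀ - γ * w₀) = 0)
    -- the Jacobian at (u₀,0,w₀) has eigenvalues 0, iμ₀, −iμ₀
    (hJ : ((!![0, 1, 0; -hd / 5, c / 5, 1 / 5; δ / c, 0, -(δ * γ) / c] :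
        Matrix (Fin 3) (Fin 3) ℝ).map (Complex.ofReal)).charpoly
        = X * (X - C (μ₀ * Complex.I)) * (X + C (μ₀ * Complex.I))) :
    γ * hd = 1 ∧ c ^ 2 = 0.05 * γ ∧ (c > 0 → c = Real.sqrt (0.05 * γ)) ∧
      μ₀ ^ 2 = (100 - γ ^ 2) / (500 * γ) ∧ (100 - γ ^ 2) / (500 * γ) > 0 := by
  have hcC : (c:ℂ) ≠ 0 := Complex.ofReal_ne_zero.mpr hc
  rw [Matrix.charpoly, Matrix.det_fin_three] at hJ
  simp [charmatrix_apply_eq, charmatrix_apply_ne, Matrix.map_apply] at hJ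
  have h0 := congrArg (Polynomial.eval 0) hJ
  have h1 := congrArg (Polynomial.eval 1) hJ
  have hm1 := congrArg (Polynomial.eval (-1)) hJ
  simp only [Polynomial.eval_mul, Polynomial.eval_add, Polynomial.eval_sub, Polynomial.eval_neg,
    Polynomial.eval_X, Polynomial.eval_C, Polynomial.eval_one] at h0 h1 hm1
  field_simp at h0 h1 hm1
  have hδ' : δ ≠ 0 := by rw [hδ]; norm_num
  have hB : γ * hd = 1 := by
    have h : ((δ * (γ * hd) : ℝ) : ℂ) = ((δ : ℝ):ℂ) := by push_cast; linear_combination h0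
    have h' : δ * (γ * hd) = δ * 1 := by rw [mul_one]; exact_mod_cast h
    have := mul_left_cancel₀ hδ' h'
    linarith [this]
  have hA : c ^ 2 = 0.05 * γ := by
    have h : ((c^2 : ℝ) : ℂ) = ((5*δ*γ : ℝ):ℂ) := by
      push_cast; linear_combination (-1/2 : ℂ) * h1 - (1/2 : ℂ) * hm1 + h0
    have h' : c^2 = 5*δ*γ := by exact_mod_cast h
    rw [h', hδ]; norm_num
  have hE : 5 * μ₀ ^ 2 = hd - 0.01 * γ := by
    have h : ((5*c*μ₀^2 : ℝ) : ℂ) = ((c*hd - δ*c*γ : ℝ):ℂ) := by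
      push_cast
      linear_combination (-1/2 : ℂ) * h1 + (1/2 : ℂ) * hm1 + (5*c*μ₀^2 : ℂ) * Complex.I_sq
    have h' : 5*c*μ₀^2 = c*hd - δ*c*γ := by exact_mod_cast h
    have := mul_left_cancel₀ hc (show c*(5*μ₀^2) = c*(hd - δ*γ) by linear_combination h')
    rw [hδ] at this; linarith
  have hμsq : μ₀ ^ 2 = (100 - γ ^ 2) / (500 * γ) := by
    rw [eq_div_iff (by positivity)]
    linear_combination 100 * γ * hE + 100 * hB
  refine ⟨hB, hA, ?_, hμsq, ?_⟩
  · intro hcpos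
    rw [← hA, Real.sqrt_sq hcpos.le]
  · rw [← hμsq]; positivity
end

section
/- For all u in the periodic Sobolev space H²_per([0,1],ℂ) and every integer n > 1, the inequality ‖u'‖₂ ≤ (1/(n−1))‖u''‖₂ + (2n(n+1)/(n−1))‖u‖₂ holds, where ‖·‖₂ is the L²([0,1]) norm. -/
/-!
Since `(ū u')' = |u'|² + ū u''` and the boundary term vanishes over a period,
`∫ |u'|² = -Re ∫ ū u'' ≤ ∫ |u| |u''|`. Splitting the product by weighted AM–GM,
`|u| |u''| ≤ ε² |u''|² + |u|² / (2ε)²`, gives `‖u'‖₂ ≤ ε ‖u''‖₂ + ‖u‖₂ / (2ε)` for every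
`ε > 0`; the theorem is the case `ε = 1/(n-1)`, as `(n-1)/2 ≤ 2n(n+1)/(n-1)`.
-/

open intervalIntegral

theorem Function.Periodic.deriv {𝕜 E : Type*} [NontriviallyNormedField 𝕜]
    [NormedAddCommGroup E] [NormedSpace 𝕜 E] {f : 𝕜 → E} {c : 𝕜}
    (h : Function.Periodic f c) : Function.Periodic (deriv f) c := fun x => by
  rw [← deriv_comp_add_const, h.funext]

theorem neg_re_star_mul_le {ε : ℝ} (hε : 0 < ε) (z w : ℂ) :
    -(star z * w).re ≤ ε ^ 2 * ‖w‖ ^ 2 + (2 * ε)⁻¹ ^ 2 * ‖z‖ ^ 2 := by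
  have h_norm : -(star z * w).re ≤ ‖z‖ * ‖w‖ := by
    simpa only [norm_mul, norm_star] using
      (neg_le_abs _).trans (Complex.abs_re_le_norm (star z * w))
  have h_amgm := two_mul_le_add_mul_sq (a := ‖w‖) (b := ‖z‖) (by positivity : 0 < 2 * ε ^ 2)
  have h_coeff : (2 * ε ^ 2)⁻¹ = 2 * (2 * ε)⁻¹ ^ 2 := by field_simp
  rw [h_coeff] at h_amgm
  nlinarith

theorem hasDerivAt_re_star_mul_deriv {u : ℝ → ℂ} {x : ℝ} (hu : DifferentiableAt ℝ u x)
    (hu' : DifferentiableAt ℝ (deriv u) x) :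
    HasDerivAt (fun y => (star (u y) * deriv u y).re)
      (‖deriv u x‖ ^ 2 + (star (u x) * deriv (deriv u) x).re) x := by
  have h := Complex.reCLM.hasFDerivAt.comp_hasDerivAt x
    (hu.hasDerivAt.star.mul hu'.hasDerivAt)
  rwa [Complex.reCLM_apply, Complex.add_re, Complex.star_def, ← Complex.normSq_eq_conj_mul_self,
    Complex.ofReal_re, Complex.normSq_eq_norm_sq] at h

theorem integral_norm_deriv_sq_eq_neg_integral_re {u : ℝ → ℂ} (hu : ContDiff ℝ 2 u) {a b : ℝ}
    (hu_ab : u a = u b) (hu'_ab : deriv u a = deriv u b) :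
    ∫ x in a..b, ‖deriv u x‖ ^ 2 = -∫ x in a..b, (star (u x) * deriv (deriv u) x).re := by
  have hu' : ContDiff ℝ 1 (deriv u) := hu.iterate_deriv' 1 1
  have hu'' : Continuous (deriv (deriv u)) := (hu.iterate_deriv' 0 2).continuous
  have h_int₁ : IntervalIntegrable (fun x => ‖deriv u x‖ ^ 2) MeasureTheory.volume a b :=
    (hu'.continuous.norm.pow 2).intervalIntegrable a b
  have h_int₂ : IntervalIntegrable (fun x => (star (u x) * deriv (deriv u) x).re)
      MeasureTheory.volume a b :=
    (Complex.continuous_re.comp ((hu.continuous.star).mul hu'')).intervalIntegrable a b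
  have h_ftc := integral_eq_sub_of_hasDerivAt
    (fun x _ => hasDerivAt_re_star_mul_deriv (hu.differentiable (by norm_num) x)
      (hu'.differentiable one_ne_zero x)) (h_int₁.add h_int₂)
  rw [integral_add h_int₁ h_int₂, hu_ab, hu'_ab, sub_self] at h_ftc
  linarith

theorem integral_norm_deriv_sq_le {u : ℝ → ℂ} (hu : ContDiff ℝ 2 u) {a b : ℝ} (hab : a ≤ b)
    (hu_ab : u a = u b) (hu'_ab : deriv u a = deriv u b) {ε : ℝ} (hε : 0 < ε) :
    ∫ x in a..b, ‖deriv u x‖ ^ 2 ≤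
      ε ^ 2 * (∫ x in a..b, ‖deriv (deriv u) x‖ ^ 2) + (2 * ε)⁻¹ ^ 2 * ∫ x in a..b, ‖u x‖ ^ 2 := by
  have hu'' : Continuous (deriv (deriv u)) := (hu.iterate_deriv' 0 2).continuous
  have h_int₁ : IntervalIntegrable (fun x => ε ^ 2 * ‖deriv (deriv u) x‖ ^ 2)
      MeasureTheory.volume a b :=
    ((hu''.norm.pow 2).const_smul (ε ^ 2)).intervalIntegrable a b
  have h_int₂ : IntervalIntegrable (fun x => (2 * ε)⁻¹ ^ 2 * ‖u x‖ ^ 2)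
      MeasureTheory.volume a b :=
    ((hu.continuous.norm.pow 2).const_smul ((2 * ε)⁻¹ ^ 2)).intervalIntegrable a b
  rw [integral_norm_deriv_sq_eq_neg_integral_re hu hu_ab hu'_ab, ← integral_neg,
    ← integral_const_mul, ← integral_const_mul, ← integral_add h_int₁ h_int₂]
  refine integral_mono_on hab ?_ (h_int₁.add h_int₂) fun x _ => neg_re_star_mul_le hε _ _
  exact (Complex.continuous_re.comp (hu.continuous.star.mul hu'')).neg.intervalIntegrable a b

theorem Real.sqrt_le_mul_sqrt_add_mul_sqrt {x y z a c : ℝ} (ha : 0 ≤ a) (hc : 0 ≤ c)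
    (hy : 0 ≤ y) (hz : 0 ≤ z) (h : x ≤ a ^ 2 * y + c ^ 2 * z) :
    √x ≤ a * √y + c * √z := by
  rw [Real.sqrt_le_iff]
  refine ⟨by positivity, ?_⟩
  nlinarith [Real.sq_sqrt hy, Real.sq_sqrt hz, mul_nonneg (mul_nonneg ha hc)
    (mul_nonneg (Real.sqrt_nonneg y) (Real.sqrt_nonneg z))]

theorem sqrt_integral_norm_deriv_sq_le {u : ℝ → ℂ} (hu : ContDiff ℝ 2 u) {a b : ℝ} (hab : a ≤ b)
    (hu_ab : u a = u b) (hu'_ab : deriv u a = deriv u b) {ε : ℝ} (hε : 0 < ε) :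
    √(∫ x in a..b, ‖deriv u x‖ ^ 2) ≤
      ε * √(∫ x in a..b, ‖deriv (deriv u) x‖ ^ 2) + (2 * ε)⁻¹ * √(∫ x in a..b, ‖u x‖ ^ 2) :=
  Real.sqrt_le_mul_sqrt_add_mul_sqrt hε.le (by positivity)
    (integral_nonneg hab fun _ _ => by positivity) (integral_nonneg hab fun _ _ => by positivity)
    (integral_norm_deriv_sq_le hu hab hu_ab hu'_ab hε)

/-- Kato's inequality (1.12): for every 1-periodic `u` of class `C²`
(`u ∈ H²_per([0,1],ℂ)`) and every integer `n > 1`,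
`‖u'‖₂ ≤ (1/(n−1))‖u''‖₂ + (2n(n+1)/(n−1))‖u‖₂` in the `L²([0,1])` norm. -/
theorem stmt_15 (u : ℝ → ℂ) (hper : Function.Periodic u 1)
    (hu : ContDiff ℝ 2 u) (n : ℕ) (hn : 1 < n) :
    Real.sqrt (∫ x in (0:ℝ)..1, ‖deriv u x‖ ^ 2)
      ≤ (1 / ((n : ℝ) - 1)) *
          Real.sqrt (∫ x in (0:ℝ)..1, ‖deriv (deriv u) x‖ ^ 2)
        + (2 * (n : ℝ) * ((n : ℝ) + 1) / ((n : ℝ) - 1)) *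
          Real.sqrt (∫ x in (0:ℝ)..1, ‖u x‖ ^ 2) := by
  have hn₁ : (0 : ℝ) < n - 1 := by
    rw [sub_pos]
    exact_mod_cast hn
  have h_period : ∀ f : ℝ → ℂ, Function.Periodic f 1 → f 0 = f 1 := fun f hf => by
    simpa using (hf 0).symm
  have h_coeff : (2 * (1 / ((n : ℝ) - 1)))⁻¹ ≤ 2 * n * (n + 1) / (n - 1) := by
    rw [one_div, ← div_eq_mul_inv, inv_div, div_le_div_iff₀ two_pos hn₁]
    nlinarith
  refine (sqrt_integral_norm_deriv_sq_le hu zero_le_one (h_period u hper)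
    (h_period _ hper.deriv) (one_div_pos.mpr hn₁)).trans ?_
  gcongr
end
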